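/- arXiv:2604.21946 — 3 statements merged into one kernel-verified Lean document; each statement's English description precedes it below -/
import Mathlib

section
/- Assume M(x) = \sum_{p \le x} (\log p)/p satisfies M(x) = \log x + O(1). Then there exists c > 0 such that S(x) = \sum_{p \le x} \sqrt{(\log p)/p} \ge c \sqrt{x/\log x} for all sufficiently large x. -/
open Filter

noncomputable def primesUpTo (x : ℝ) : Finset ℕ :=
  (Finset.range (⌊x⌋₊ + 1)).filter Nat.Prime

noncomputable def S (x : ℝ) : ℝ := ∑ p ∈ primesUpTo x, Real.sqrt (Real.log p / p)

noncomputable def M (x : ℝ) : ℝ := ∑ p ∈ primesUpTo x, Real.log p / p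

theorem stmt_7 (hM : (fun x => M x - Real.log x) =O[atTop] (fun _ => (1 : ℝ))) :
    ∃ c : ℝ, 0 < c ∧ ∀ᶠ x : ℝ in atTop, c * Real.sqrt (x / Real.log x) ≤ S x := by
  obtain ⟨C, hC⟩ := hM.bound
  rw [eventually_atTop] at hC
  obtain ⟨T, hT⟩ := hC
  set C' : ℝ := max C 1 with hC'def
  have hC'1 : 1 ≤ C' := le_max_right _ _
  set K : ℝ := Real.exp (2 * C' + 1) with hKdef
  have hK1 : 1 < K := by
    rw [hKdef]
    calc (1:ℝ) = Real.exp 0 := (Real.exp_zero).symm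
    _ < _ := Real.exp_lt_exp.2 (by linarith)
  have hK0 : 0 < K := by linarith
  have hlogK : Real.log K = 2 * C' + 1 := Real.log_exp _
  refine ⟨(Real.sqrt K)⁻¹, by positivity, ?_⟩
  rw [eventually_atTop]
  refine ⟨max (K * (max T 3)) 3, fun x hx => ?_⟩
  have hx3 : 3 ≤ x := le_trans (le_max_right _ _) hx
  have hx0 : 0 < x := by linarith
  have hxK : max T 3 ≤ x / K := by
    rw [le_div_iff₀ hK0]
    calc max T 3 * K = K * max T 3 := mul_comm _ _
    _ ≤ x := le_trans (le_max_left _ _) hx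
  have hxK3 : 3 ≤ x / K := le_trans (le_max_right _ _) hxK
  have hxK0 : 0 < x / K := by linarith
  have hxKx : x / K ≤ x := by
    rw [div_le_iff₀ hK0]; nlinarith
  have hlogx : 1 ≤ Real.log x := by
    rw [show (1:ℝ) = Real.log (Real.exp 1) from (Real.log_exp 1).symm]
    apply Real.log_le_log (Real.exp_pos 1)
    linarith [Real.exp_one_lt_d9]
  have hlogx0 : 0 < Real.log x := by linarith
  -- bounds on M from the hypothesis
  have hMx : |M x - Real.log x| ≤ C' := by
    have h := hT x (((le_max_left _ _).trans hxK).trans hxKx)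
    simp only [Real.norm_eq_abs, norm_one, mul_one] at h
    exact h.trans (le_max_left _ _)
  have hMxK : |M (x / K) - Real.log (x / K)| ≤ C' := by
    have h := hT (x / K) ((le_max_left _ _).trans hxK)
    simp only [Real.norm_eq_abs, norm_one, mul_one] at h
    exact h.trans (le_max_left _ _)
  have hlogdiv : Real.log (x / K) = Real.log x - Real.log K :=
    Real.log_div (by linarith) (by linarith)
  have hdiff : 1 ≤ M x - M (x / K) := by
    have h1 := abs_le.1 hMx
    have h2 := abs_le.1 hMxK
    rw [hlogdiv, hlogK] at h2
    linarith [h1.1, h1.2, h2.1, h2.2]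
  -- the set of primes in (x/K, x]
  have hsub : primesUpTo (x / K) ⊆ primesUpTo x := by
    unfold primesUpTo
    apply Finset.filter_subset_filter
    apply Finset.range_subset_range.2
    have : ⌊x / K⌋₊ ≤ ⌊x⌋₊ := Nat.floor_le_floor hxKx
    omega
  set A := primesUpTo x \ primesUpTo (x / K) with hAdef
  have hsumA : ∑ p ∈ A, Real.log p / p = M x - M (x / K) :=
    Finset.sum_sdiff_eq_sub hsub
  set a : ℝ := (x / K) / Real.log x with hadef
  have ha0 : 0 ≤ a := by positivity
  have key : ∀ p ∈ A, Real.sqrt a * (Real.log p / p) ≤ Real.sqrt (Real.log p / p) := by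
    intro p hp
    obtain ⟨hp1, hp2⟩ := Finset.mem_sdiff.1 hp
    have hpprime : p.Prime := (Finset.mem_filter.1 hp1).2
    have hp2' : 2 ≤ p := hpprime.two_le
    have hpx : (p : ℝ) ≤ x := by
      have hmem := Finset.mem_range.1 (Finset.mem_filter.1 hp1).1
      have hle : p ≤ ⌊x⌋₊ := by omega
      exact le_trans (Nat.cast_le.2 hle) (Nat.floor_le hx0.le)
    have hpxK : x / K ≤ (p : ℝ) := by
      have hlt : ⌊x / K⌋₊ < p := by
        by_contra h
        push_neg at h
        exact hp2 (Finset.mem_filter.2 ⟨Finset.mem_range.2 (by omega), hpprime⟩)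
      exact le_of_lt ((Nat.floor_lt hxK0.le).1 hlt)
    have hp0 : (0:ℝ) < p := by positivity
    have hlogp : 0 < Real.log p := Real.log_pos (by exact_mod_cast hp2')
    have hlogpx : Real.log p ≤ Real.log x := Real.log_le_log hp0 hpx
    set t : ℝ := Real.log p / p with htdef
    have ht0 : 0 ≤ t := by positivity
    have hat : a * t ≤ 1 := by
      rw [hadef, htdef, div_mul_div_comm, div_le_one (by positivity)]
      nlinarith
    calc Real.sqrt a * t = Real.sqrt a * (Real.sqrt t * Real.sqrt t) := by
          rw [Real.mul_self_sqrt ht0]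
      _ = (Real.sqrt a * Real.sqrt t) * Real.sqrt t := by ring
      _ = Real.sqrt (a * t) * Real.sqrt t := by rw [Real.sqrt_mul ha0]
      _ ≤ 1 * Real.sqrt t := by
          apply mul_le_mul_of_nonneg_right _ (Real.sqrt_nonneg _)
          exact Real.sqrt_le_one.2 hat
      _ = Real.sqrt t := one_mul _
  have hstep : Real.sqrt a ≤ S x := by
    calc Real.sqrt a = Real.sqrt a * 1 := (mul_one _).symm
      _ ≤ Real.sqrt a * (M x - M (x / K)) := by
          apply mul_le_mul_of_nonneg_left hdiff (Real.sqrt_nonneg _)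
      _ = ∑ p ∈ A, Real.sqrt a * (Real.log p / p) := by
          rw [← hsumA, Finset.mul_sum]
      _ ≤ ∑ p ∈ A, Real.sqrt (Real.log p / p) := Finset.sum_le_sum key
      _ ≤ S x := by
          apply Finset.sum_le_sum_of_subset_of_nonneg (Finset.sdiff_subset)
          intro p _ _
          exact Real.sqrt_nonneg _
  have heq : Real.sqrt a = (Real.sqrt K)⁻¹ * Real.sqrt (x / Real.log x) := by
    have : a = (x / Real.log x) / K := by rw [hadef]; ring
    rw [this, Real.sqrt_div (by positivity)]
    ring
  rw [← heq]
  exact hstep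
end

section
/- Assume M(x) = \sum_{p \le x} (\log p)/p satisfies M(x) = \log x + O(1). Then there exists C > 0 such that S(x) = \sum_{p \le x} \sqrt{(\log p)/p} \le C \sqrt{x/\log x} for all sufficiently large x. -/
open Filter

/-!
Write `√(log p / p) = (log p / √p) / √(log p)`. Primes `p ≤ x^{1/4}` contribute at most
`x^{1/4} + 1` to `S x`, and the others have `log p ≥ (log x) / 4`, so it suffices that
`T x = ∑_{p ≤ x} log p / √p` is `O(√x)`. Mertens gives `M (2y) - M y = O(1)`, hence
`T (2y) - T y = O(√y)` on each dyadic block, and these bounds sum as a geometric series.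
-/

open Real

noncomputable def T (x : ℝ) : ℝ := ∑ p ∈ primesUpTo x, log p / √p

lemma mem_primesUpTo {p : ℕ} {x : ℝ} (hx : 0 ≤ x) :
    p ∈ primesUpTo x ↔ p.Prime ∧ (p : ℝ) ≤ x := by
  simp [primesUpTo, Nat.le_floor_iff hx, and_comm]

lemma primesUpTo_mono {y x : ℝ} (h : y ≤ x) : primesUpTo y ⊆ primesUpTo x :=
  Finset.filter_subset_filter _ <| Finset.range_subset_range.2 <| by
    have := Nat.floor_mono h
    omega

lemma sum_primesUpTo_sub_le {f g : ℕ → ℝ} {c y x : ℝ} (hy : 0 ≤ y) (hyx : y ≤ x)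
    (hfg : ∀ p : ℕ, p.Prime → y < p → p ≤ x → f p ≤ c * g p) :
    ∑ p ∈ primesUpTo x, f p - ∑ p ∈ primesUpTo y, f p ≤
      c * (∑ p ∈ primesUpTo x, g p - ∑ p ∈ primesUpTo y, g p) := by
  have hsub := primesUpTo_mono hyx
  rw [← Finset.sum_sdiff_eq_sub hsub, ← Finset.sum_sdiff_eq_sub hsub, Finset.mul_sum]
  refine Finset.sum_le_sum fun p hp => ?_
  obtain ⟨hpx, hpy⟩ := Finset.mem_sdiff.1 hp
  obtain ⟨hp, hpx⟩ := (mem_primesUpTo (hy.trans hyx)).1 hpx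
  exact hfg p hp (lt_of_not_ge fun h => hpy ((mem_primesUpTo hy).2 ⟨hp, h⟩)) hpx

lemma T_sub_le {y x : ℝ} (hy : 0 ≤ y) (hyx : y ≤ x) : T x - T y ≤ √x * (M x - M y) :=
  sum_primesUpTo_sub_le hy hyx fun p hp _ hpx => by
    have hp0 : (0 : ℝ) < p := by exact_mod_cast hp.pos
    have hsqrt : (0 : ℝ) < √p := sqrt_pos.2 hp0
    calc log p / √p = √p * (log p / p) := by
          rw [mul_div_assoc', div_eq_div_iff hsqrt.ne' hp0.ne']
          linear_combination -log p * mul_self_sqrt hp0.le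
      _ ≤ √x * (log p / p) := by gcongr

lemma S_sub_le {y x : ℝ} (hy : 1 < y) (hyx : y ≤ x) : S x - S y ≤ (T x - T y) / √(log y) := by
  rw [div_eq_inv_mul]
  refine sum_primesUpTo_sub_le (by linarith) hyx fun p hp hyp _ => ?_
  have hp0 : (0 : ℝ) < p := by linarith
  have hlogp : 0 ≤ log p := log_natCast_nonneg p
  have hlogy : 0 < √(log y) := sqrt_pos.2 (log_pos hy)
  have hlog : √(log y) ≤ √(log p) := sqrt_le_sqrt (log_le_log (by linarith) hyp.le)
  calc √(log p / p) = √(log p) / √p := sqrt_div hlogp _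
    _ ≤ √(log p) / √(log y) * (√(log p) / √p) :=
        le_mul_of_one_le_left (by positivity) ((one_le_div hlogy).2 hlog)
    _ = (√(log y))⁻¹ * (log p / √p) := by
        rw [div_mul_div_comm, mul_self_sqrt hlogp]
        ring

lemma S_le_add_one {y : ℝ} (hy : 0 ≤ y) : S y ≤ y + 1 := by
  calc S y ≤ ∑ _p ∈ primesUpTo y, (1 : ℝ) := Finset.sum_le_sum fun p hp => by
        have hp0 : (0 : ℝ) < p := by exact_mod_cast ((mem_primesUpTo hy).1 hp).1.pos
        rw [sqrt_le_one, div_le_one hp0]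
        exact log_le_self hp0.le
    _ ≤ (Finset.range (⌊y⌋₊ + 1)).card := by
        rw [Finset.sum_const, nsmul_one]
        exact_mod_cast Finset.card_filter_le _ _
    _ ≤ y + 1 := by
        rw [Finset.card_range, Nat.cast_add_one]
        linarith [Nat.floor_le hy]

lemma sub_le_of_dyadic_sub_le {F : ℝ → ℝ} {c x₀ : ℝ} (hc : 0 ≤ c) (hx₀ : 0 < x₀)
    (hF : ∀ y x, x₀ ≤ y → y ≤ x → x ≤ 2 * y → F x - F y ≤ c * √x)
    {y x : ℝ} (hy : x₀ ≤ y) (hyx : y ≤ x) : F x - F y ≤ 4 * c * √x := by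
  have hy0 : 0 < y := hx₀.trans_le hy
  obtain ⟨n, hn⟩ := pow_unbounded_of_one_lt (x / y) one_lt_two
  rw [div_lt_iff₀ hy0] at hn
  induction n generalizing x with
  | zero =>
    rw [pow_zero, one_mul] at hn
    linarith
  | succ n ih =>
    by_cases hx : x ≤ 2 * y
    · nlinarith [hF y x hy hyx hx, sqrt_nonneg x]
    · have hhalf := ih (x := x / 2) (by linarith) (by rw [pow_succ] at hn; linarith)
      have htop := hF (x / 2) x (by linarith) (by linarith) (by linarith)
      -- `1 + 4 / √2 ≤ 4`: the constant `4` survives one halving step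
      have hsqrt : 4 * √(x / 2) ≤ 3 * √x := by
        have h2 := sq_sqrt (show 0 ≤ x / 2 by linarith)
        have h1 := sq_sqrt (show 0 ≤ x by linarith)
        nlinarith [sqrt_nonneg (x / 2), sqrt_nonneg x]
      nlinarith

lemma exists_sub_le_of_isBigO_sub_log {F : ℝ → ℝ}
    (hF : (fun x => F x - log x) =O[atTop] (fun _ => (1 : ℝ))) :
    ∃ c x₀, 0 ≤ c ∧ 0 < x₀ ∧ ∀ y x, x₀ ≤ y → y ≤ x → x ≤ 2 * y → F x - F y ≤ c := by
  obtain ⟨B, hB, hFB⟩ := hF.exists_nonneg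
  obtain ⟨x₁, hx₁⟩ := eventually_atTop.1 (Asymptotics.isBigOWith_iff.1 hFB)
  refine ⟨log 2 + 2 * B, max x₁ 1, by positivity, by positivity, fun y x hy hyx hx => ?_⟩
  have hy0 : 0 < y := lt_of_lt_of_le one_pos ((le_max_right _ _).trans hy)
  have hFy := hx₁ y ((le_max_left _ _).trans hy)
  have hFx := hx₁ x ((le_max_left _ _).trans (hy.trans hyx))
  simp only [norm_one, mul_one, Real.norm_eq_abs, abs_le] at hFx hFy
  have hlog : log x ≤ log 2 + log y := by
    rw [← log_mul two_ne_zero hy0.ne']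
    exact log_le_log (hy0.trans_le hyx) hx
  linarith [hFx.2, hFy.1]

lemma exists_T_sub_le (hM : (fun x => M x - log x) =O[atTop] (fun _ => (1 : ℝ))) :
    ∃ c x₀, 0 ≤ c ∧ ∀ y x, x₀ ≤ y → y ≤ x → T x - T y ≤ c * √x := by
  obtain ⟨c, x₀, hc, hx₀, hMc⟩ := exists_sub_le_of_isBigO_sub_log hM
  refine ⟨4 * c, x₀, by positivity, fun y x hy hyx => ?_⟩
  refine sub_le_of_dyadic_sub_le hc hx₀ (fun y x hy hyx hx => ?_) hy hyx
  calc T x - T y ≤ √x * (M x - M y) := T_sub_le (hx₀.le.trans hy) hyx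
    _ ≤ c * √x := by
        rw [mul_comm c]
        exact mul_le_mul_of_nonneg_left (hMc y x hy hyx hx) (sqrt_nonneg x)

lemma sqrt_le_two_mul_div_log {x : ℝ} (hx : 1 < x) : √x ≤ 2 * (x / log x) := by
  have hlog : log x ≤ 2 * √x := by
    have := log_le_sub_one_of_pos (sqrt_pos.2 (zero_lt_one.trans hx))
    rw [log_sqrt (by linarith)] at this
    linarith
  rw [mul_div_assoc', le_div_iff₀ (log_pos hx)]
  calc √x * log x ≤ √x * (2 * √x) := mul_le_mul_of_nonneg_left hlog (sqrt_nonneg x)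
    _ = 2 * x := by rw [mul_left_comm, mul_self_sqrt (by linarith)]

theorem stmt_8 (hM : (fun x => M x - Real.log x) =O[atTop] (fun _ => (1 : ℝ))) :
    ∃ C : ℝ, 0 < C ∧ ∀ᶠ x : ℝ in atTop, S x ≤ C * Real.sqrt (x / Real.log x) := by
  obtain ⟨c, x₀, hc, hT⟩ := exists_T_sub_le hM
  refine ⟨2 * c + 2 * √2, by positivity, ?_⟩
  have hroot : Tendsto (fun x : ℝ => √√x) atTop atTop := tendsto_sqrt_atTop.comp tendsto_sqrt_atTop
  filter_upwards [hroot.eventually_ge_atTop x₀, hroot.eventually_gt_atTop 1,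
    eventually_gt_atTop 1] with x hy₀ hy1 hx1
  set y := √√x
  have hsqrtx : √x ≤ x := sqrt_le_self_iff.2 (Or.inr hx1.le)
  have hyx : y ≤ x := (sqrt_le_sqrt hsqrtx).trans hsqrtx
  have hlogy : √(log y) = √(log x) / 2 := by
    rw [log_sqrt (sqrt_nonneg x), log_sqrt (by linarith), div_div, sqrt_div' _ (by norm_num),
      show (2 * 2 : ℝ) = 2 ^ 2 by norm_num, sqrt_sq zero_le_two]
  have hy : y ≤ √2 * √(x / log x) := by
    rw [← sqrt_mul zero_le_two]
    exact sqrt_le_sqrt (sqrt_le_two_mul_div_log hx1)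
  calc S x ≤ S y + (T x - T y) / √(log y) := by linarith [S_sub_le hy1 hyx]
    _ ≤ 2 * y + c * √x / √(log y) := by
        gcongr
        · linarith [S_le_add_one (zero_le_one.trans hy1.le)]
        · exact hT y x hy₀ hyx
    _ = 2 * y + 2 * c * √(x / log x) := by
        rw [hlogy, sqrt_div' _ (log_pos hx1).le]
        ring
    _ ≤ (2 * c + 2 * √2) * √(x / log x) := by linarith
end

section
/- Assume S(x) \asymp \sqrt{x/\log x}. Then a_n S_{n-1} \asymp 1 as n \to \infty, where a_n = \sqrt{(\log p_n)/p_n}, p_n is the n-th prime, and S_{n-1} = \sum_{k < n} a_k. -/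
open Filter

noncomputable def nthPrime (n : ℕ) : ℕ := Nat.nth Nat.Prime (n - 1)

noncomputable def a (n : ℕ) : ℝ :=
  Real.sqrt (Real.log (nthPrime n) / (nthPrime n))

lemma nth_prime_prime (i : ℕ) : (Nat.nth Nat.Prime i).Prime :=
  Nat.nth_mem_of_infinite Nat.infinite_setOf_prime i

lemma primesUpTo_nth (m : ℕ) :
    primesUpTo ((Nat.nth Nat.Prime m : ℕ) : ℝ) =
      (Finset.range (m + 1)).image (Nat.nth Nat.Prime) := by
  ext q
  simp only [primesUpTo, Finset.mem_filter, Finset.mem_range, Finset.mem_image,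
    Nat.floor_natCast, Nat.lt_succ_iff]
  constructor
  · rintro ⟨hq, hp⟩
    exact ⟨Nat.count Nat.Prime q, Nat.le_nth_of_count_le hq, Nat.nth_count hp⟩
  · rintro ⟨i, hi, rfl⟩
    exact ⟨(Nat.nth_le_nth Nat.infinite_setOf_prime).2 hi, nth_prime_prime i⟩

lemma sum_a_eq (m : ℕ) (hm : 1 ≤ m) :
    ∑ k ∈ Finset.Icc 1 m, a k = S ((Nat.nth Nat.Prime (m - 1) : ℕ) : ℝ) := by
  have hm1 : m - 1 + 1 = m := by omega
  rw [S, primesUpTo_nth, hm1,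
    Finset.sum_image (fun x _ y _ h => Nat.nth_injective Nat.infinite_setOf_prime h)]
  refine Finset.sum_nbij' (fun k => k - 1) (fun i => i + 1) ?_ ?_ ?_ ?_ ?_
  · intro k hk; simp only [Finset.mem_Icc] at hk; simp only [Finset.mem_range]; omega
  · intro i hi; simp only [Finset.mem_range] at hi; simp only [Finset.mem_Icc]; omega
  · intro k hk; simp only [Finset.mem_Icc] at hk; omega
  · intro i _; omega
  · intro k hk
    simp only [Finset.mem_Icc] at hk
    simp [a, nthPrime]

lemma nth_prime_le_two_mul (i : ℕ) :
    Nat.nth Nat.Prime (i + 1) ≤ 2 * Nat.nth Nat.Prime i := by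
  obtain ⟨q, hq, h1, h2⟩ := Nat.exists_prime_lt_and_le_two_mul (Nat.nth Nat.Prime i)
    (by have := (nth_prime_prime i).two_le; omega)
  have hle : Nat.nth Nat.Prime (i + 1) ≤ q := by
    by_contra h
    push_neg at h
    exact absurd (Nat.le_nth_of_lt_nth_succ h hq) (by omega)
  omega

theorem stmt_10
    (hS : ∃ c C : ℝ, 0 < c ∧ c ≤ C ∧ ∀ᶠ x : ℝ in atTop,
      c * Real.sqrt (x / Real.log x) ≤ S x ∧ S x ≤ C * Real.sqrt (x / Real.log x)) :
    ∃ c C : ℝ, 0 < c ∧ c ≤ C ∧ ∀ᶠ n : ℕ in atTop,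
      c ≤ a n * (∑ k ∈ Finset.Icc 1 (n - 1), a k) ∧
      a n * (∑ k ∈ Finset.Icc 1 (n - 1), a k) ≤ C := by
  obtain ⟨c, C, hc, hcC, hev⟩ := hS
  have hC : 0 < C := hc.trans_le hcC
  have hs2 : (0:ℝ) < Real.sqrt 2 := Real.sqrt_pos.2 (by norm_num)
  refine ⟨c / Real.sqrt 2, C * Real.sqrt 2, by positivity, ?_, ?_⟩
  · have h1 : (1:ℝ) ≤ Real.sqrt 2 := by
      rw [show (1:ℝ) = Real.sqrt 1 by simp]
      exact Real.sqrt_le_sqrt (by norm_num)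
    calc c / Real.sqrt 2 ≤ c := by
          rw [div_le_iff₀ hs2]; nlinarith
      _ ≤ C := hcC
      _ ≤ C * Real.sqrt 2 := by nlinarith
  · rw [eventually_atTop] at hev ⊢
    obtain ⟨x0, hx0⟩ := hev
    refine ⟨⌈x0⌉₊ + 2, fun n hn => ?_⟩
    set i := n - 2 with hi
    have hn2 : 2 ≤ n := by omega
    -- the sum equals S at the (n-1)-st prime
    have hsum : ∑ k ∈ Finset.Icc 1 (n - 1), a k
        = S ((Nat.nth Nat.Prime i : ℕ) : ℝ) := by
      rw [sum_a_eq (n - 1) (by omega), show n - 1 - 1 = i by omega]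
    set Pm := Nat.nth Nat.Prime i with hPm
    set Pn := Nat.nth Nat.Prime (i + 1) with hPn
    have han : a n = Real.sqrt (Real.log Pn / Pn) := by
      have h : nthPrime n = Pn := by
        rw [hPn, hi]; unfold nthPrime; congr 1; omega
      show Real.sqrt (Real.log (nthPrime n) / (nthPrime n)) = _
      rw [h]
    have hPm2 : 2 ≤ Pm := (nth_prime_prime i).two_le
    have hPmPn : Pm ≤ Pn := (Nat.nth_le_nth Nat.infinite_setOf_prime).2 (Nat.le_succ i)
    have hPn2 : Pn ≤ 2 * Pm := nth_prime_le_two_mul i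
    set P : ℝ := (Pm : ℝ) with hP
    set Q : ℝ := (Pn : ℝ) with hQ
    have h2P : (2:ℝ) ≤ P := by rw [hP]; exact_mod_cast hPm2
    have hPQ : P ≤ Q := by rw [hP, hQ]; exact_mod_cast hPmPn
    have hQ2P : Q ≤ 2 * P := by rw [hP, hQ]; exact_mod_cast hPn2
    have hPpos : (0:ℝ) < P := by linarith
    have hQpos : (0:ℝ) < Q := by linarith
    have hLP : 0 < Real.log P := Real.log_pos (by linarith)
    have hLQ : 0 < Real.log Q := Real.log_pos (by linarith)
    have hLPQ : Real.log P ≤ Real.log Q := Real.log_le_log hPpos hPQ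
    have hLQ2 : Real.log Q ≤ 2 * Real.log P := by
      have h1 : Real.log Q ≤ Real.log (2 * P) := Real.log_le_log hQpos hQ2P
      have h2 : Real.log (2 * P) = Real.log 2 + Real.log P :=
        Real.log_mul (by norm_num) (by linarith)
      have h3 : Real.log 2 ≤ Real.log P := Real.log_le_log (by norm_num) h2P
      linarith
    -- apply the hypothesis at x = P
    have hPx0 : x0 ≤ P := by
      have h1 : x0 ≤ (⌈x0⌉₊ : ℝ) := Nat.le_ceil x0
      have h2 : (⌈x0⌉₊ : ℝ) ≤ (i : ℝ) := by exact_mod_cast Nat.cast_le.2 (by omega : ⌈x0⌉₊ ≤ i)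
      have h3 : (i : ℝ) ≤ P := by
        rw [hP]
        exact_mod_cast Nat.le_nth (p := Nat.Prime) (n := i)
          (fun hf => absurd hf Nat.infinite_setOf_prime)
      linarith
    obtain ⟨hlow, hhigh⟩ := hx0 P hPx0
    -- key product identity
    set r : ℝ := Real.log Q / Q * (P / Real.log P) with hr
    have hrpos : 0 < r := by positivity
    have hkey : Real.sqrt (Real.log Q / Q) * Real.sqrt (P / Real.log P) = Real.sqrt r :=
      (Real.sqrt_mul (by positivity) _).symm
    have hr2 : r ≤ 2 := by
      rw [hr, div_mul_div_comm, div_le_iff₀ (by positivity)]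
      nlinarith
    have hr1 : (1:ℝ) / 2 ≤ r := by
      rw [hr, div_mul_div_comm, le_div_iff₀ (by positivity)]
      nlinarith
    have hsr2 : Real.sqrt r ≤ Real.sqrt 2 := Real.sqrt_le_sqrt hr2
    have hsr1 : 1 / Real.sqrt 2 ≤ Real.sqrt r := by
      have h12 : Real.sqrt ((1:ℝ) / 2) = 1 / Real.sqrt 2 := by
        rw [one_div, one_div, Real.sqrt_inv]
      rw [← h12]
      exact Real.sqrt_le_sqrt hr1
    rw [hsum, han]
    constructor
    · calc c / Real.sqrt 2 = c * (1 / Real.sqrt 2) := by ring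
        _ ≤ c * Real.sqrt r := mul_le_mul_of_nonneg_left hsr1 hc.le
        _ = Real.sqrt (Real.log Q / Q) * (c * Real.sqrt (P / Real.log P)) := by
            rw [← hkey]; ring
        _ ≤ Real.sqrt (Real.log Q / Q) * S P :=
            mul_le_mul_of_nonneg_left hlow (Real.sqrt_nonneg _)
    · calc Real.sqrt (Real.log Q / Q) * S P
          ≤ Real.sqrt (Real.log Q / Q) * (C * Real.sqrt (P / Real.log P)) :=
            mul_le_mul_of_nonneg_left hhigh (Real.sqrt_nonneg _)
        _ = C * Real.sqrt r := by rw [← hkey]; ring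
        _ ≤ C * Real.sqrt 2 := mul_le_mul_of_nonneg_left hsr2 hC.le
end
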